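/- arXiv:1401.0840 — 3 statements merged into one kernel-verified Lean document; each statement's English description precedes it below -/
import Mathlib

section
/- Let f, g : X → ℝ be Lipschitz functions on a metric space X, let φ : ℝ → ℝ be a C¹ function with 0 ≤ φ' ≤ 1, and let ψ : [0,∞) → ℝ be a convex nondecreasing function. Define f̃ := f + φ(g − f) and g̃ := g − φ(g − f). Then for every x ∈ X, ψ(|Df̃|(x)) + ψ(|Dg̃|(x)) ≤ ψ(|Df|(x)) + ψ(|Dg|(x)), where |Dh|(x) := limsup_{y→x} |h(y)−h(x)|/d(y,x) is the local Lipschitz constant. -/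
/-!
Put `a = g x - f x` and `θ y = dslope φ a (g y - f y)`. Then exactly
`f̃ y - f̃ x = (1 - θ y) (f y - f x) + θ y (g y - g x)` and symmetrically for `g̃`, with
`θ y ∈ [0, 1]` by the mean value theorem and `θ y → λ := φ'(a)` as `y → x`. Passing to the
limsup gives `|Df̃|(x) ≤ (1 - λ)|Df|(x) + λ|Dg|(x)` and
`|Dg̃|(x) ≤ (1 - λ)|Dg|(x) + λ|Df|(x)`; applying the monotone convex `ψ` and adding, the
weights `λ` and `1 - λ` recombine.
-/

open Filter Topology Set

/-- The local Lipschitz constant (slope) of `h` at `x`: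
`|Dh|(x) = limsup_{y→x} |h(y) − h(x)| / d(y,x)`. -/
noncomputable def localSlope {X : Type*} [MetricSpace X] (h : X → ℝ) (x : X) : ℝ :=
  Filter.limsup (fun y => |h y - h x| / dist y x) (𝓝[≠] x)

theorem Filter.limsup_le_of_le_convexComb {ι : Type*} {F : Filter ι} {p q w θ : ι → ℝ}
    {c : ℝ} (hp : IsBoundedUnder (· ≤ ·) F p) (hq : IsBoundedUnder (· ≤ ·) F q)
    (hw : IsCoboundedUnder (· ≤ ·) F w) (hθ : Tendsto θ F (𝓝 c))
    (hθ01 : ∀ᶠ i in F, θ i ∈ Icc (0 : ℝ) 1)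
    (hwpq : ∀ᶠ i in F, w i ≤ (1 - θ i) * p i + θ i * q i) :
    limsup w F ≤ (1 - c) * limsup p F + c * limsup q F := by
  set U := limsup p F
  set V := limsup q F
  refine le_of_forall_pos_le_add fun ε hε => ?_
  set δ := ε / (1 + |V - U|)
  have hδ : 0 < δ := by positivity
  have hδε : δ * (1 + |V - U|) = ε := div_mul_cancel₀ _ (by positivity)
  have hpU := eventually_lt_of_limsup_lt (lt_add_of_pos_right U hδ) hp
  have hqV := eventually_lt_of_limsup_lt (lt_add_of_pos_right V hδ) hq
  have hθc : ∀ᶠ i in F, |θ i - c| < δ := by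
    simpa only [Real.dist_eq] using Metric.tendsto_nhds.mp hθ δ hδ
  refine limsup_le_of_le hw ?_
  filter_upwards [hwpq, hθ01, hpU, hqV, hθc] with i hwi ⟨hθ0, hθ1⟩ hpi hqi hθi
  have hθ1' : 0 ≤ 1 - θ i := sub_nonneg.2 hθ1
  have hcross : (θ i - c) * (V - U) ≤ δ * |V - U| :=
    calc (θ i - c) * (V - U) ≤ |θ i - c| * |V - U| := (le_abs_self _).trans (abs_mul _ _).le
      _ ≤ δ * |V - U| := by gcongr
  calc w i ≤ (1 - θ i) * p i + θ i * q i := hwi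
    _ ≤ (1 - θ i) * (U + δ) + θ i * (V + δ) := by gcongr
    _ = (1 - c) * U + c * V + δ + (θ i - c) * (V - U) := by ring
    _ ≤ (1 - c) * U + c * V + δ + δ * |V - U| := by linarith
    _ = (1 - c) * U + c * V + ε := by rw [← hδε]; ring

theorem abs_convexComb_div_le {θ : ℝ} (hθ : θ ∈ Icc (0 : ℝ) 1) (a b : ℝ) {d : ℝ}
    (hd : 0 ≤ d) :
    |(1 - θ) * a + θ * b| / d ≤ (1 - θ) * (|a| / d) + θ * (|b| / d) := by
  rw [← mul_div_assoc, ← mul_div_assoc, ← add_div]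
  gcongr
  calc |(1 - θ) * a + θ * b| ≤ |(1 - θ) * a| + |θ * b| := abs_add_le _ _
    _ = (1 - θ) * |a| + θ * |b| := by
      rw [abs_mul, abs_mul, abs_of_nonneg (sub_nonneg.2 hθ.2), abs_of_nonneg hθ.1]

theorem dslope_mem_range_deriv {φ : ℝ → ℝ} (hφ : Differentiable ℝ φ) (a b : ℝ) :
    dslope φ a b ∈ range (deriv φ) := by
  rcases lt_trichotomy b a with hba | rfl | hab
  · obtain ⟨c, -, hc⟩ :=
      exists_deriv_eq_slope' φ hba hφ.continuous.continuousOn hφ.differentiableOn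
    exact ⟨c, by rw [hc, dslope_of_ne _ hba.ne, slope_comm]⟩
  · exact ⟨b, (dslope_same φ b).symm⟩
  · obtain ⟨c, -, hc⟩ :=
      exists_deriv_eq_slope' φ hab hφ.continuous.continuousOn hφ.differentiableOn
    exact ⟨c, by rw [hc, dslope_of_ne _ hab.ne']⟩

theorem ConvexOn.map_add_map_le_of_le_convexComb {ψ : ℝ → ℝ}
    (hconv : ConvexOn ℝ (Ici 0) ψ) (hmono : MonotoneOn ψ (Ici 0)) {s t u v c : ℝ}
    (hs : 0 ≤ s) (ht : 0 ≤ t) (hu : 0 ≤ u) (hv : 0 ≤ v) (hc : c ∈ Icc (0 : ℝ) 1)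
    (hsuv : s ≤ (1 - c) * u + c * v) (htvu : t ≤ (1 - c) * v + c * u) :
    ψ s + ψ t ≤ ψ u + ψ v := by
  have hc' : 0 ≤ 1 - c := sub_nonneg.2 hc.2
  have hmix : ∀ {u v : ℝ}, 0 ≤ u → 0 ≤ v →
      ψ ((1 - c) * u + c * v) ≤ (1 - c) * ψ u + c * ψ v :=
    fun hu hv => hconv.2 hu hv hc' hc.1 (sub_add_cancel 1 c)
  calc ψ s + ψ t ≤ ψ ((1 - c) * u + c * v) + ψ ((1 - c) * v + c * u) :=
        add_le_add (hmono hs (hs.trans hsuv) hsuv) (hmono ht (ht.trans htvu) htvu)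
    _ ≤ ((1 - c) * ψ u + c * ψ v) + ((1 - c) * ψ v + c * ψ u) :=
        add_le_add (hmix hu hv) (hmix hv hu)
    _ = ψ u + ψ v := by ring

section Slope

variable {X : Type*} [MetricSpace X]

theorem localSlope_eq_zero_of_nhdsNE_eq_bot {x : X} (hx : 𝓝[≠] x = ⊥) (h : X → ℝ) :
    localSlope h x = 0 := by
  simp [localSlope, hx, limsup_eq]

theorem localSlope_nonneg {x : X} [(𝓝[≠] x).NeBot] (h : X → ℝ) :
    0 ≤ localSlope h x := by
  rw [localSlope, limsup_eq]
  refine Real.sInf_nonneg fun a ha => ?_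
  obtain ⟨y, hy⟩ := Eventually.exists (f := 𝓝[≠] x) ha
  exact (div_nonneg (abs_nonneg _) dist_nonneg).trans hy

theorem LipschitzWith.abs_sub_div_dist_le {K : NNReal} {h : X → ℝ} (hh : LipschitzWith K h)
    (x y : X) : |h y - h x| / dist y x ≤ K := by
  rw [← Real.dist_eq]
  exact div_le_of_le_mul₀ dist_nonneg K.coe_nonneg (hh.dist_le_mul y x)

theorem localSlope_le_of_sub_eq_convexComb {x : X} [(𝓝[≠] x).NeBot] {f g h θ : X → ℝ}
    {Kf Kg : NNReal} {c : ℝ} (hf : LipschitzWith Kf f) (hg : LipschitzWith Kg g)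
    (hθ : Tendsto θ (𝓝[≠] x) (𝓝 c)) (hθ01 : ∀ y, θ y ∈ Icc (0 : ℝ) 1)
    (hh : ∀ y, h y - h x = (1 - θ y) * (f y - f x) + θ y * (g y - g x)) :
    localSlope h x ≤ (1 - c) * localSlope f x + c * localSlope g x :=
  limsup_le_of_le_convexComb (isBoundedUnder_of ⟨Kf, hf.abs_sub_div_dist_le x⟩)
    (isBoundedUnder_of ⟨Kg, hg.abs_sub_div_dist_le x⟩)
    (isCoboundedUnder_le_of_le _ fun _ => by positivity) hθ (Eventually.of_forall hθ01)
    (Eventually.of_forall fun y => hh y ▸ abs_convexComb_div_le (hθ01 y) _ _ dist_nonneg)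

end Slope

theorem slope_convex_exchange_general {X : Type*} [MetricSpace X]
    (f g : X → ℝ) (Kf Kg : NNReal)
    (hf : LipschitzWith Kf f) (hg : LipschitzWith Kg g)
    (φ : ℝ → ℝ) (hφ : ContDiff ℝ 1 φ)
    (hφ'0 : ∀ s, 0 ≤ deriv φ s) (hφ'1 : ∀ s, deriv φ s ≤ 1)
    (ψ : ℝ → ℝ) (hψconv : ConvexOn ℝ (Ici 0) ψ) (hψmono : MonotoneOn ψ (Ici 0))
    (x : X) :
    ψ (localSlope (fun y => f y + φ (g y - f y)) x)
        + ψ (localSlope (fun y => g y - φ (g y - f y)) x)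
      ≤ ψ (localSlope f x) + ψ (localSlope g x) := by
  rcases (𝓝[≠] x).eq_or_neBot with hx | hx
  · -- at an isolated point every slope is the junk value `0`
    simp only [localSlope_eq_zero_of_nhdsNE_eq_bot hx, le_refl]
  have hφd : Differentiable ℝ φ := hφ.differentiable one_ne_zero
  set a := g x - f x
  set θ : X → ℝ := fun y => dslope φ a (g y - f y)
  have hθ01 : ∀ b, dslope φ a b ∈ Icc (0 : ℝ) 1 := fun b => by
    obtain ⟨s, hs⟩ := dslope_mem_range_deriv hφd a b
    exact hs ▸ ⟨hφ'0 s, hφ'1 s⟩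
  have hθ : Tendsto θ (𝓝[≠] x) (𝓝 (dslope φ a a)) :=
    ((continuousAt_dslope_same.2 (hφd a)).tendsto.comp
      ((hg.continuous.sub hf.continuous).tendsto x)).mono_left nhdsWithin_le_nhds
  have hφθ : ∀ y, φ (g y - f y) - φ a = θ y * ((g y - f y) - a) := fun y => by
    rw [mul_comm]; exact (sub_smul_dslope φ a _).symm
  have hf' := localSlope_le_of_sub_eq_convexComb (h := fun y => f y + φ (g y - f y)) hf hg hθ
    (fun _ => hθ01 _) fun y => by linear_combination hφθ y
  have hg' := localSlope_le_of_sub_eq_convexComb (h := fun y => g y - φ (g y - f y)) hg hf hθ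
    (fun _ => hθ01 _) fun y => by linear_combination -hφθ y
  exact hψconv.map_add_map_le_of_le_convexComb hψmono (localSlope_nonneg _) (localSlope_nonneg _)
    (localSlope_nonneg _) (localSlope_nonneg _) (hθ01 a) hf' hg'

/-- For Lipschitz `f g : X → ℝ`, a `C¹` function `φ` with `0 ≤ φ' ≤ 1`,
and a convex nondecreasing `ψ : [0,∞) → ℝ`, setting `f̃ = f + φ(g−f)` and `g̃ = g − φ(g−f)`
one has `ψ(|Df̃|(x)) + ψ(|Dg̃|(x)) ≤ ψ(|Df|(x)) + ψ(|Dg|(x))` for every `x`. -/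
theorem slope_convex_exchange {X : Type*} [MetricSpace X]
    (hX : ∀ x : X, (𝓝[≠] x).NeBot)
    (f g : X → ℝ) (Kf Kg : NNReal)
    (hf : LipschitzWith Kf f) (hg : LipschitzWith Kg g)
    (φ : ℝ → ℝ) (hφ : ContDiff ℝ 1 φ)
    (hφ'0 : ∀ s, 0 ≤ deriv φ s) (hφ'1 : ∀ s, deriv φ s ≤ 1)
    (ψ : ℝ → ℝ) (hψconv : ConvexOn ℝ (Ici 0) ψ) (hψmono : MonotoneOn ψ (Ici 0))
    (x : X) :
    ψ (localSlope (fun y => f y + φ (g y - f y)) x)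
        + ψ (localSlope (fun y => g y - φ (g y - f y)) x)
      ≤ ψ (localSlope f x) + ψ (localSlope g x) :=
  slope_convex_exchange_general f g Kf Kg hf hg φ hφ hφ'0 hφ'1 ψ hψconv hψmono x
end

section
/- For p ∈ (2,3), all x ≥ 0 and V ≥ 0, the inequality x·ln_p(x) ≥ x − exp_p(−V^p) − (p−2)·V^p·exp_p(−V^p) + (p−3)·V^p·x holds, where ln_p(s) = (s^{2−p} − 1)/(2−p) and exp_p(t) = (1 + (2−p)t)^{1/(2−p)}. -/
open Real Set

/-!
With `s = 2 - p ∈ (-1, 0)` and `e = exp_p(-V^p)`, so that `e^s = 1 - s V^p`, the claim multiplied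
by `s < 0` is the tangent-line bound for the concave power `t ↦ t^(1+s)` at `t = e`, evaluated at
`t = x`.
-/

theorem Real.rpow_le_tangent {q x e : ℝ} (hq₀ : 0 ≤ q) (hq₁ : q ≤ 1) (hx : 0 ≤ x) (he : 0 < e) :
    x ^ q ≤ e ^ (q - 1) * (q * x + (1 - q) * e) := by
  have amgm : x ^ q * e ^ (1 - q) ≤ q * x + (1 - q) * e :=
    geom_mean_le_arith_mean2_weighted hq₀ (by linarith) hx he.le (by ring)
  calc x ^ q = e ^ (q - 1) * (x ^ q * e ^ (1 - q)) := by
        rw [mul_left_comm, ← rpow_add he, sub_add_sub_cancel', sub_self, rpow_zero, mul_one]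
    _ ≤ e ^ (q - 1) * (q * x + (1 - q) * e) := by gcongr

/-- For `p ∈ (2,3)`, all `x ≥ 0` and `V ≥ 0`:
`x·ln_p(x) ≥ x − exp_p(−V^p) − (p−2)·V^p·exp_p(−V^p) + (p−3)·V^p·x`,
where `ln_p(s) = (s^(2−p) − 1)/(2−p)` and `exp_p(t) = (1 + (2−p)t)^(1/(2−p))`. -/
theorem mul_plog_ge (p x V : ℝ) (hp : p ∈ Ioo (2:ℝ) 3) (hx : 0 ≤ x) (hV : 0 ≤ V) :
    x * ((x ^ (2 - p) - 1) / (2 - p)) ≥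
      x - (1 + (2 - p) * (-(V ^ p))) ^ (1 / (2 - p))
        - (p - 2) * V ^ p * ((1 + (2 - p) * (-(V ^ p))) ^ (1 / (2 - p)))
        + (p - 3) * V ^ p * x := by
  obtain ⟨hp2, hp3⟩ := hp
  set s := 2 - p with hs
  have hs0 : s < 0 := by linarith
  set w := V ^ p
  have hw : 0 ≤ w := rpow_nonneg hV p
  have hbase : 0 < 1 + s * -w := by nlinarith
  set e := (1 + s * -w) ^ (1 / s)
  have he : 0 < e := rpow_pos_of_pos hbase _
  have hes : e ^ s = 1 + s * -w := by
    change ((1 + s * -w) ^ (1 / s)) ^ s = _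
    rw [one_div, rpow_inv_rpow hbase.le hs0.ne]
  have tangent := rpow_le_tangent (q := 1 + s) (by linarith) (by linarith) hx he
  rw [add_sub_cancel_left, hes, rpow_one_add' hx (by linarith)] at tangent
  rw [ge_iff_le, mul_div_assoc', le_div_iff_of_neg hs0]
  linear_combination tangent
end

section
/- Let E be a K-geodesically convex, lower semicontinuous functional on a geodesic metric space X. Then the descending slope admits the representation |D⁻E|(x) = sup_{y ≠ x} ( (E(x)−E(y))/d(x,y) + (K/2)·d(x,y) )₊ , and in particular |D⁻E| is lower semicontinuous. -/
open Filter Topology Set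
open scoped ENNReal

/-- The descending slope `|D⁻E|(x) = limsup_{y→x} [E(x)−E(y)]₊ / d(y,x)`,
valued in `[0,∞]`. -/
noncomputable def descendingSlopeE {X : Type*} [MetricSpace X] (E : X → ℝ) (x : X) : ℝ≥0∞ :=
  Filter.limsup (fun y => ENNReal.ofReal (max (E x - E y) 0 / dist y x)) (𝓝[≠] x)

/-!
The inequality `≤` holds for every function: the term `(K/2) d(x,y)` vanishes as `y → x`, so
near `x` the difference quotients are dominated by the supremum. For `≥`, along a geodesic `γ`
from `x` to `y` convexity gives
`[E(x) − E(γₜ)] / d(x,γₜ) ≥ (E(x) − E(y))/d(x,y) + (K/2)(1 − t) d(x,y)`, and `t → 0⁺` yields the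
term of index `y`. Each term of the supremum is lower semicontinuous in `x` when `E` is, hence so
is the slope.
-/

section DescendingSlope

variable {X : Type*} [MetricSpace X]

theorem ofReal_max_div_dist (a : ℝ) (x y : X) :
    ENNReal.ofReal (max a 0 / dist y x) = ENNReal.ofReal (a / dist y x) := by
  rw [← max_div_div_right dist_nonneg, zero_div, ENNReal.ofReal_max, ENNReal.ofReal_zero,
    max_eq_left zero_le]

theorem descendingSlopeE_le_iSup (E : X → ℝ) (K : ℝ) (x : X) :
    descendingSlopeE E x ≤
      ⨆ (y : X) (_ : y ≠ x), ENNReal.ofReal ((E x - E y) / dist x y + K / 2 * dist x y) := by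
  set G := ⨆ (y : X) (_ : y ≠ x), ENNReal.ofReal ((E x - E y) / dist x y + K / 2 * dist x y)
  have hbound : ∀ y, y ≠ x → ENNReal.ofReal (max (E x - E y) 0 / dist y x)
      ≤ G + ENNReal.ofReal (|K| / 2 * dist y x) := by
    intro y hy
    have hreal : (E x - E y) / dist y x
        ≤ ((E x - E y) / dist x y + K / 2 * dist x y) + |K| / 2 * dist y x := by
      rw [dist_comm x y]
      nlinarith [neg_abs_le K, dist_nonneg (x := y) (y := x)]
    calc ENNReal.ofReal (max (E x - E y) 0 / dist y x)
        = ENNReal.ofReal ((E x - E y) / dist y x) := ofReal_max_div_dist _ _ _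
      _ ≤ ENNReal.ofReal ((E x - E y) / dist x y + K / 2 * dist x y)
            + ENNReal.ofReal (|K| / 2 * dist y x) :=
          (ENNReal.ofReal_le_ofReal hreal).trans ENNReal.ofReal_add_le
      _ ≤ G + ENNReal.ofReal (|K| / 2 * dist y x) := by gcongr; exact le_iSup₂_of_le y hy le_rfl
  have hsmall : Tendsto (fun y => ENNReal.ofReal (|K| / 2 * dist y x)) (𝓝 x) (𝓝 0) := by
    have hcont : Continuous fun y => ENNReal.ofReal (|K| / 2 * dist y x) :=
      ENNReal.continuous_ofReal.comp (by fun_prop)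
    simpa using hcont.tendsto x
  refine ENNReal.le_of_forall_pos_le_add fun ε hε _ => limsup_le_of_le (h := ?_)
  filter_upwards [self_mem_nhdsWithin,
    nhdsWithin_le_nhds (hsmall.eventually (gt_mem_nhds (ENNReal.coe_pos.2 hε)))] with y hy hyε
  exact (hbound y hy).trans (by gcongr)

theorem tendsto_nhdsNE_of_dist_eq_mul {γ : ℝ → X} {x : X} {D : ℝ} (hD : 0 < D)
    (hγ : ∀ t ∈ Icc (0 : ℝ) 1, dist (γ t) x = t * D) : Tendsto γ (𝓝[>] 0) (𝓝[≠] x) := by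
  have hIoc : ∀ᶠ t in 𝓝[>] (0 : ℝ), t ∈ Ioc (0 : ℝ) 1 := Ioc_mem_nhdsGT one_pos
  refine tendsto_nhdsWithin_iff.2 ⟨tendsto_iff_dist_tendsto_zero.2 ?_, ?_⟩
  · have hlin : Tendsto (fun t : ℝ => t * D) (𝓝[>] 0) (𝓝 0) := by
      have hcont : Continuous fun t : ℝ => t * D := by fun_prop
      simpa using (hcont.tendsto 0).mono_left nhdsWithin_le_nhds
    refine hlin.congr' ?_
    filter_upwards [hIoc] with t ht
    exact (hγ t (Ioc_subset_Icc_self ht)).symm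
  · filter_upwards [hIoc] with t ht
    rw [mem_compl_singleton_iff, ← dist_pos, hγ t (Ioc_subset_Icc_self ht)]
    exact mul_pos ht.1 hD

theorem ofReal_slopeTerm_le_descendingSlopeE {E : X → ℝ} {K : ℝ} {x y : X} (hxy : x ≠ y)
    {γ : ℝ → X} (hγ : ∀ t ∈ Icc (0 : ℝ) 1, dist (γ t) x = t * dist x y)
    (hE : ∀ t ∈ Icc (0 : ℝ) 1,
      E (γ t) ≤ (1 - t) * E x + t * E y - K / 2 * t * (1 - t) * dist x y ^ 2) :
    ENNReal.ofReal ((E x - E y) / dist x y + K / 2 * dist x y) ≤ descendingSlopeE E x := by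
  set D := dist x y
  have hD : 0 < D := dist_pos.2 hxy
  let g : ℝ → ℝ≥0∞ := fun t => ENNReal.ofReal ((E x - E y) / D + K / 2 * (1 - t) * D)
  have hg : Tendsto g (𝓝[>] 0) (𝓝 (ENNReal.ofReal ((E x - E y) / D + K / 2 * D))) := by
    have hcont : Continuous g := ENNReal.continuous_ofReal.comp (by fun_prop)
    simpa [g] using (hcont.tendsto 0).mono_left nhdsWithin_le_nhds
  have hquot : ∀ᶠ t in 𝓝[>] (0 : ℝ),
      g t ≤ ENNReal.ofReal (max (E x - E (γ t)) 0 / dist (γ t) x) := by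
    filter_upwards [Ioc_mem_nhdsGT one_pos] with t ht
    have ht' : t ∈ Icc (0 : ℝ) 1 := Ioc_subset_Icc_self ht
    have hdrop : t * (E x - E y) + K / 2 * t * (1 - t) * D ^ 2 ≤ max (E x - E (γ t)) 0 :=
      le_max_of_le_left (by linarith [hE t ht'])
    have hrewrite : (E x - E y) / D + K / 2 * (1 - t) * D
        = (t * (E x - E y) + K / 2 * t * (1 - t) * D ^ 2) / (t * D) := by
      field_simp [ht.1.ne']
    rw [hγ t ht']
    exact ENNReal.ofReal_le_ofReal
      (hrewrite ▸ div_le_div_of_nonneg_right hdrop (mul_pos ht.1 hD).le)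
  calc ENNReal.ofReal ((E x - E y) / D + K / 2 * D)
      = limsup g (𝓝[>] 0) := hg.limsup_eq.symm
    _ ≤ limsup (fun t => ENNReal.ofReal (max (E x - E (γ t)) 0 / dist (γ t) x)) (𝓝[>] 0) :=
        limsup_le_limsup hquot
    _ ≤ descendingSlopeE E x := by
        rw [← Function.comp_def, limsup_comp]
        exact limsup_le_limsup_of_le (u := fun z => ENNReal.ofReal (max (E x - E z) 0 / dist z x))
          (tendsto_nhdsNE_of_dist_eq_mul hD hγ)

/-- The term of index `y = x` is `ofReal ((E x - E x) / 0 + K / 2 * 0) = 0`, so excluding it does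
not change the supremum. -/
theorem iSup_ne_ofReal_slopeTerm (E : X → ℝ) (K : ℝ) (x : X) :
    ⨆ (y : X) (_ : y ≠ x), ENNReal.ofReal ((E x - E y) / dist x y + K / 2 * dist x y) =
      ⨆ y : X, ENNReal.ofReal ((E x - E y) / dist x y + K / 2 * dist x y) := by
  refine le_antisymm (iSup₂_le fun y _ => le_iSup_of_le y le_rfl) (iSup_le fun y => ?_)
  rcases eq_or_ne y x with rfl | hyx
  · simp
  · exact le_iSup₂_of_le y hyx le_rfl

theorem lowerSemicontinuous_ofReal_slopeTerm {E : X → ℝ} (hE : LowerSemicontinuous E) (K : ℝ)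
    (y : X) :
    LowerSemicontinuous fun x => ENNReal.ofReal ((E x - E y) / dist x y + K / 2 * dist x y) := by
  intro x
  rcases eq_or_ne x y with rfl | hxy
  · -- the junk value `ofReal ((E x - E x) / 0 + K / 2 * 0) = 0` is the bottom of `ℝ≥0∞`
    intro c hc
    simp at hc
  refine ENNReal.continuous_ofReal.continuousAt.comp_lowerSemicontinuousAt ?_ ENNReal.ofReal_mono
  intro c hc
  set g : X → ℝ := fun z => (c - K / 2 * dist z y) * dist z y
  have hg : Continuous g := by fun_prop
  have hgx : g x < E x - E y := by
    change c < _ at hc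
    rw [← sub_lt_iff_lt_add, lt_div_iff₀ (dist_pos.2 hxy)] at hc
    exact hc
  have hlsc : LowerSemicontinuousAt (fun z => E z + -g z) x :=
    LowerSemicontinuousAt.add (hE x) hg.neg.continuousAt.lowerSemicontinuousAt
  filter_upwards [hlsc (E y) (by linarith), eventually_ne_nhds hxy] with z hz hzy
  change E y < E z + -g z at hz
  show c < _
  rw [← sub_lt_iff_lt_add, lt_div_iff₀ (dist_pos.2 hzy)]
  linarith [show g z = (c - K / 2 * dist z y) * dist z y from rfl]

end DescendingSlope

theorem descendingSlope_sup_repr_general {X : Type*} [MetricSpace X]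
    (K : ℝ) (E : X → ℝ)
    (hlsc : LowerSemicontinuous E)
    (hconv : ∀ x₀ x₁ : X, ∃ γ : ℝ → X, γ 0 = x₀ ∧ γ 1 = x₁ ∧
      (∀ s ∈ Icc (0:ℝ) 1, ∀ t ∈ Icc (0:ℝ) 1, dist (γ s) (γ t) = |t - s| * dist x₀ x₁) ∧
      (∀ t ∈ Icc (0:ℝ) 1, E (γ t) ≤ (1 - t) * E x₀ + t * E x₁
        - K / 2 * t * (1 - t) * dist x₀ x₁ ^ 2)) :
    (∀ x : X, descendingSlopeE E x =
      ⨆ (y : X) (_ : y ≠ x), ENNReal.ofReal ((E x - E y) / dist x y + K / 2 * dist x y)) ∧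
    LowerSemicontinuous (descendingSlopeE E) := by
  have hrepr : ∀ x : X, descendingSlopeE E x =
      ⨆ (y : X) (_ : y ≠ x), ENNReal.ofReal ((E x - E y) / dist x y + K / 2 * dist x y) := by
    refine fun x => (descendingSlopeE_le_iSup E K x).antisymm (iSup₂_le fun y hyx => ?_)
    obtain ⟨γ, hγ0, -, hγdist, hγE⟩ := hconv x y
    refine ofReal_slopeTerm_le_descendingSlopeE hyx.symm (fun t ht => ?_) hγE
    calc dist (γ t) x = dist (γ t) (γ 0) := by rw [hγ0]
      _ = t * dist x y := by
        rw [hγdist t ht 0 ⟨le_rfl, zero_le_one⟩, zero_sub, abs_neg, abs_of_nonneg ht.1]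
  refine ⟨hrepr, ?_⟩
  have hslope : descendingSlopeE E =
      fun x => ⨆ y : X, ENNReal.ofReal ((E x - E y) / dist x y + K / 2 * dist x y) :=
    funext fun x => (hrepr x).trans (iSup_ne_ofReal_slopeTerm E K x)
  rw [hslope]
  exact lowerSemicontinuous_iSup fun y => lowerSemicontinuous_ofReal_slopeTerm hlsc K y

/-- If `E` is `K`-geodesically convex and lower semicontinuous on a geodesic
metric space, then the descending slope has the global representation
`|D⁻E|(x) = sup_{y ≠ x} ((E(x)−E(y))/d(x,y) + (K/2)d(x,y))₊`, and in particular `|D⁻E|` is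
lower semicontinuous. -/
theorem descendingSlope_sup_repr {X : Type*} [MetricSpace X]
    (hX : ∀ x : X, (𝓝[≠] x).NeBot) (K : ℝ) (E : X → ℝ)
    (hlsc : LowerSemicontinuous E)
    (hconv : ∀ x₀ x₁ : X, ∃ γ : ℝ → X, γ 0 = x₀ ∧ γ 1 = x₁ ∧
      (∀ s ∈ Icc (0:ℝ) 1, ∀ t ∈ Icc (0:ℝ) 1, dist (γ s) (γ t) = |t - s| * dist x₀ x₁) ∧
      (∀ t ∈ Icc (0:ℝ) 1, E (γ t) ≤ (1 - t) * E x₀ + t * E x₁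
        - K / 2 * t * (1 - t) * dist x₀ x₁ ^ 2)) :
    (∀ x : X, descendingSlopeE E x =
      ⨆ (y : X) (_ : y ≠ x), ENNReal.ofReal ((E x - E y) / dist x y + K / 2 * dist x y)) ∧
    LowerSemicontinuous (descendingSlopeE E) :=
  descendingSlope_sup_repr_general K E hlsc hconv
end
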